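/- For every bounded claim H ∈ L^∞(P), the process of super-hedging prices (E_t(H))_{t=0,...,T} is a supermartingale under every equivalent martingale measure Q ∈ M_e: E_Q[E_{t+1}(H) | F_t] ≤ E_t(H) for all t. -/

import Mathlib

/-!
If `f` is a super-hedging price at time `t` with strategy `ξ`, then trading once more gives the
time-`(t+1)` price `f + ξ_{t+1} · ΔX_{t+1} ≥ E_{t+1}(H)`. Under `Q` the increment `ΔX_{t+1}` has
zero conditional expectation given `F_t`, so conditioning yields `E_Q[E_{t+1}(H) | F_t] ≤ f`
(after localising to `F_t`-sets on which `f` and `ξ_{t+1}` are bounded). The infimum over `f`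
gives the claim.

For `E_Q[E_{t+1}(H) | F_t]` to be meaningful, `E_{t+1}(H)` must be integrable: it lies between
`-C` (the same one-step argument, run backward from `T`) and `C` (a price hedging `H` without
trading), and it agrees a.e. with a measurable function, since a `⊓`-stable family of random
variables bounded below has a measurable essential infimum.
-/

open MeasureTheory

variable {Ω : Type*}

/-- A self-financing trading strategy: `ξ k` (the position held over `(k-1, k]`) is
`F_{k-1}`-measurable. -/
def Predictable {m : MeasurableSpace Ω} {d : ℕ} (F : Filtration ℕ m)
    (ξ : ℕ → Ω → Fin d → ℝ) : Prop :=
  ∀ k : ℕ, 1 ≤ k → Measurable[F (k - 1)] (ξ k)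

/-- Gains from trading with strategy `ξ` in `X` from time `t` to time `T`:
`G_t(ξ) = ∑_{k=t+1}^T ξ_k · (X_k - X_{k-1})`. -/
def Gains {d : ℕ} (X ξ : ℕ → Ω → Fin d → ℝ) (t T : ℕ) (ω : Ω) : ℝ :=
  ∑ k ∈ Finset.Icc (t + 1) T, ∑ i, ξ k ω i * (X k ω i - X (k - 1) ω i)

/-- `Q` is an equivalent martingale measure for the price process `X` on `{0,…,T}`:
`Q` is a probability measure equivalent to `P` under which each component of `X` is
integrable and a martingale. -/
def IsEMM {m : MeasurableSpace Ω} {d : ℕ} (P Q : Measure Ω) (F : Filtration ℕ m)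
    (X : ℕ → Ω → Fin d → ℝ) (T : ℕ) : Prop :=
  IsProbabilityMeasure Q ∧ (∀ A : Set Ω, P A = 0 ↔ Q A = 0) ∧
    (∀ t, t ≤ T → ∀ i, Integrable (fun ω => X t ω i) Q) ∧
    (∀ t, t < T → ∀ i,
      (Q[(fun ω => X (t + 1) ω i)|F t]) =ᵐ[Q] fun ω => X t ω i)

/-- The set of super-hedging prices at time `t` for the claim `H`. -/
def SuperPrices {m : MeasurableSpace Ω} {d : ℕ} (P : Measure Ω)
    (F : Filtration ℕ m) (X : ℕ → Ω → Fin d → ℝ) (T t : ℕ) (H : Ω → ℝ) :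
    Set (Ω → ℝ) :=
  {g | Measurable[F t] g ∧ ∃ ξ, Predictable F ξ ∧
    ∀ᵐ ω ∂P, H ω ≤ g ω + Gains X ξ t T ω}

/-- The set of sub-hedging prices at time `t` for the claim `H`. -/
def SubPrices {m : MeasurableSpace Ω} {d : ℕ} (P : Measure Ω)
    (F : Filtration ℕ m) (X : ℕ → Ω → Fin d → ℝ) (T t : ℕ) (H : Ω → ℝ) :
    Set (Ω → ℝ) :=
  {g | Measurable[F t] g ∧ ∃ ξ, Predictable F ξ ∧
    ∀ᵐ ω ∂P, g ω + Gains X ξ t T ω ≤ H ω}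

/-- The set of conditional expectations `E_Q[H | F_t]` over `Q ∈ M_e`. -/
def MPrices {m : MeasurableSpace Ω} {d : ℕ} (P : Measure Ω)
    (F : Filtration ℕ m) (X : ℕ → Ω → Fin d → ℝ) (T t : ℕ) (H : Ω → ℝ) :
    Set (Ω → ℝ) :=
  {f | ∃ Q : Measure Ω, IsEMM P Q F X T ∧ f = Q[H|F t]}

/-- `g` is a `P`-a.e. upper bound of the family `S`. -/
def IsAEUpperBound {_m : MeasurableSpace Ω} (P : Measure Ω)
    (S : Set (Ω → ℝ)) (g : Ω → ℝ) : Prop :=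
  ∀ f ∈ S, f ≤ᵐ[P] g

/-- `g` is a `P`-a.e. lower bound of the family `S`. -/
def IsAELowerBound {_m : MeasurableSpace Ω} (P : Measure Ω)
    (S : Set (Ω → ℝ)) (g : Ω → ℝ) : Prop :=
  ∀ f ∈ S, g ≤ᵐ[P] f

/-- `g` is (a version of) the essential supremum of the family `S` under `P`. -/
def IsEssSupOf {_m : MeasurableSpace Ω} (P : Measure Ω)
    (S : Set (Ω → ℝ)) (g : Ω → ℝ) : Prop :=
  IsAEUpperBound P S g ∧ ∀ h, IsAEUpperBound P S h → g ≤ᵐ[P] h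

/-- `g` is (a version of) the essential infimum of the family `S` under `P`. -/
def IsEssInfOf {_m : MeasurableSpace Ω} (P : Measure Ω)
    (S : Set (Ω → ℝ)) (g : Ω → ℝ) : Prop :=
  IsAELowerBound P S g ∧ ∀ h, IsAELowerBound P S h → h ≤ᵐ[P] g

open Filter Real Topology

theorem exists_antitone_le_of_inf_mem {α : Type*} [SemilatticeInf α] {s : Set α}
    (hs : ∀ a ∈ s, ∀ b ∈ s, a ⊓ b ∈ s) {u : ℕ → α} (hu : ∀ n, u n ∈ s) :
    ∃ G : ℕ → α, (∀ n, G n ∈ s) ∧ Antitone G ∧ G ≤ u := by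
  let G : ℕ → α := fun n => Nat.rec (u 0) (fun n Gn => Gn ⊓ u (n + 1)) n
  refine ⟨G, fun n => ?_, antitone_nat_of_succ_le fun n => inf_le_left, fun n => ?_⟩
  · induction n with
    | zero => exact hu 0
    | succ n ih => exact hs _ ih _ (hu (n + 1))
  · cases n with
    | zero => exact le_rfl
    | succ n => exact inf_le_right

section EssInf

variable {m : MeasurableSpace Ω} {P : Measure Ω} {S : Set (Ω → ℝ)}

theorem IsEssInfOf.ae_eq {g h : Ω → ℝ} (hg : IsEssInfOf P S g) (hh : IsEssInfOf P S h) :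
    g =ᵐ[P] h :=
  (hh.2 g hg.1).antisymm (hg.2 h hh.1)

variable [IsFiniteMeasure P]

theorem integrable_arctan_comp {f : Ω → ℝ} (hf : AEStronglyMeasurable f P) :
    Integrable (fun ω => arctan (f ω)) P :=
  .of_bound (continuous_arctan.comp_aestronglyMeasurable hf) (π / 2) <| ae_of_all _ fun _ =>
    abs_le.2 ⟨(neg_pi_div_two_lt_arctan _).le, (arctan_lt_pi_div_two _).le⟩

theorem integral_arctan_comp_mono {f g : Ω → ℝ} (hf : AEStronglyMeasurable f P)
    (hg : AEStronglyMeasurable g P) (hfg : f ≤ᵐ[P] g) :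
    ∫ ω, arctan (f ω) ∂P ≤ ∫ ω, arctan (g ω) ∂P :=
  integral_mono_ae (integrable_arctan_comp hf) (integrable_arctan_comp hg) <|
    hfg.mono fun _ h => arctan_strictMono.monotone h

theorem tendsto_integral_arctan_comp {u : ℕ → Ω → ℝ} {v : Ω → ℝ}
    (hu : ∀ n, AEStronglyMeasurable (u n) P)
    (huv : ∀ᵐ ω ∂P, Tendsto (fun n => u n ω) atTop (𝓝 (v ω))) :
    Tendsto (fun n => ∫ ω, arctan (u n ω) ∂P) atTop (𝓝 (∫ ω, arctan (v ω) ∂P)) :=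
  tendsto_integral_of_dominated_convergence (fun _ => π / 2)
    (fun n => continuous_arctan.comp_aestronglyMeasurable (hu n)) (integrable_const _)
    (fun _ => ae_of_all _ fun _ =>
      abs_le.2 ⟨(neg_pi_div_two_lt_arctan _).le, (arctan_lt_pi_div_two _).le⟩)
    (huv.mono fun _ h => (continuous_arctan.tendsto _).comp h)

theorem ae_le_of_integral_arctan_le_integral_arctan_inf {f g : Ω → ℝ}
    (hf : AEStronglyMeasurable f P) (hg : AEStronglyMeasurable g P)
    (h : ∫ ω, arctan (f ω) ∂P ≤ ∫ ω, arctan ((f ⊓ g) ω) ∂P) : f ≤ᵐ[P] g := by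
  have hfg : f ⊓ g ≤ᵐ[P] f := ae_of_all _ fun _ => inf_le_left
  have heq : (fun ω => arctan ((f ⊓ g) ω)) =ᵐ[P] fun ω => arctan (f ω) :=
    (integral_eq_iff_of_ae_le (integrable_arctan_comp (hf.inf hg)) (integrable_arctan_comp hf)
      (hfg.mono fun _ h => arctan_strictMono.monotone h)).1
      ((integral_arctan_comp_mono (hf.inf hg) hf hfg).antisymm h)
  filter_upwards [heq] with ω hω
  exact inf_eq_left.1 (arctan_strictMono.injective hω)

/-- The essential infimum is the limit of a decreasing sequence in `S` minimising
`f ↦ ∫ arctan ∘ f`; since `arctan` is bounded, this functional is finite on all of `S`. -/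
theorem exists_measurable_isEssInfOf (hne : S.Nonempty) (hSm : ∀ f ∈ S, Measurable f)
    (hinf : ∀ f ∈ S, ∀ f' ∈ S, f ⊓ f' ∈ S) {l : Ω → ℝ} (hl : IsAELowerBound P S l) :
    ∃ h, Measurable h ∧ IsEssInfOf P S h := by
  set ψ : (Ω → ℝ) → ℝ := fun f => ∫ ω, arctan (f ω) ∂P
  have hψS : BddBelow (ψ '' S) := ⟨∫ _, -(π / 2) ∂P, by
    rintro _ ⟨f, hf, rfl⟩
    exact integral_mono (integrable_const _)
      (integrable_arctan_comp (hSm f hf).aestronglyMeasurable)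
      fun _ => (neg_pi_div_two_lt_arctan _).le⟩
  obtain ⟨r, -, hr, hrS⟩ := exists_seq_tendsto_sInf (hne.image ψ) hψS
  choose u huS hur using hrS
  obtain ⟨G, hGS, hGanti, hGu⟩ := exists_antitone_le_of_inf_mem hinf huS
  have hGm n : Measurable (G n) := hSm _ (hGS n)
  have hψG : Tendsto (fun n => ψ (G n)) atTop (𝓝 (sInf (ψ '' S))) :=
    tendsto_of_tendsto_of_tendsto_of_le_of_le tendsto_const_nhds
      (by convert hr using 1; exact funext hur)
      (fun n => csInf_le hψS ⟨_, hGS n, rfl⟩) fun n =>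
        integral_arctan_comp_mono (hGm n).aestronglyMeasurable
          (hSm _ (huS n)).aestronglyMeasurable (ae_of_all _ (hGu n))
  set h : Ω → ℝ := fun ω => ⨅ n, G n ω
  have hGh : ∀ᵐ ω ∂P, Tendsto (fun n => G n ω) atTop (𝓝 (h ω)) := by
    filter_upwards [ae_all_iff.2 fun n => hl _ (hGS n)] with ω hω
    exact tendsto_atTop_ciInf (fun _ _ hab => hGanti hab ω) ⟨l ω, by rintro _ ⟨n, rfl⟩; exact hω n⟩
  have hm : Measurable h := Measurable.iInf hGm
  have hψh : ψ h = sInf (ψ '' S) := tendsto_nhds_unique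
    (tendsto_integral_arctan_comp (fun n => (hGm n).aestronglyMeasurable) hGh) hψG
  refine ⟨h, hm, fun f hf => ?_, fun l' hl' => ?_⟩
  · refine ae_le_of_integral_arctan_le_integral_arctan_inf hm.aestronglyMeasurable
      (hSm f hf).aestronglyMeasurable ?_
    change ψ h ≤ ψ (h ⊓ f)
    refine hψh ▸ ge_of_tendsto (x := atTop) ?_ (Eventually.of_forall fun n =>
      csInf_le hψS ⟨_, hinf _ (hGS n) _ hf, rfl⟩)
    exact tendsto_integral_arctan_comp (fun n => ((hGm n).inf (hSm f hf)).aestronglyMeasurable)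
      (hGh.mono fun ω hω => hω.min tendsto_const_nhds)
  · filter_upwards [ae_all_iff.2 fun n => hl' _ (hGS n)] with ω hω
    exact le_ciInf hω

end EssInf

section CondExp

variable {m m₀ : MeasurableSpace Ω} {Q : Measure Ω} {d : ℕ} {c : ℝ}

theorem condExp_mul_eq_zero_of_norm_le (hm : m ≤ m₀) {φ Y : Ω → ℝ}
    (hφ : StronglyMeasurable[m] φ) (hφc : ∀ ω, ‖φ ω‖ ≤ c) (hY : Integrable Y Q)
    (hY0 : Q[Y|m] =ᵐ[Q] 0) : Q[φ * Y|m] =ᵐ[Q] 0 :=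
  (condExp_mul_of_stronglyMeasurable_left hφ
    (hY.bdd_mul (hφ.mono hm).aestronglyMeasurable (ae_of_all _ hφc)) hY).trans
    (hY0.mono fun _ h => by simp [h])

variable {ζ Y : Ω → Fin d → ℝ}

theorem integrable_sum_mul_of_norm_le (hm : m ≤ m₀) (hζ : Measurable[m] ζ)
    (hζc : ∀ ω, ‖ζ ω‖ ≤ c) (hY : ∀ i, Integrable (fun ω => Y ω i) Q) :
    Integrable (fun ω => ∑ i, ζ ω i * Y ω i) Q :=
  integrable_finsetSum _ fun i _ => (hY i).bdd_mul
    (((measurable_pi_apply i).comp (hζ.mono hm le_rfl)).aestronglyMeasurable)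
    (ae_of_all _ fun ω => (norm_le_pi_norm (ζ ω) i).trans (hζc ω))

theorem condExp_sum_mul_eq_zero_of_norm_le (hm : m ≤ m₀) (hζ : Measurable[m] ζ)
    (hζc : ∀ ω, ‖ζ ω‖ ≤ c) (hY : ∀ i, Integrable (fun ω => Y ω i) Q)
    (hY0 : ∀ i, Q[fun ω => Y ω i|m] =ᵐ[Q] 0) :
    Q[fun ω => ∑ i, ζ ω i * Y ω i|m] =ᵐ[Q] 0 := by
  have hζi i : StronglyMeasurable[m] fun ω => ζ ω i :=
    ((measurable_pi_apply i).comp hζ).stronglyMeasurable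
  have hζic i ω : ‖ζ ω i‖ ≤ c := (norm_le_pi_norm (ζ ω) i).trans (hζc ω)
  have hsum : (fun ω => ∑ i, ζ ω i * Y ω i) = ∑ i, (fun ω => ζ ω i) * fun ω => Y ω i := by
    ext ω; simp
  rw [hsum]
  refine (condExp_finsetSum (fun i _ => (hY i).bdd_mul ((hζi i).mono hm).aestronglyMeasurable
    (ae_of_all _ (hζic i))) m).trans ?_
  filter_upwards [ae_all_iff.2 fun i => condExp_mul_eq_zero_of_norm_le hm (hζi i) (hζic i)
    (hY i) (hY0 i)] with ω hω
  rw [Finset.sum_apply]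
  exact Finset.sum_eq_zero fun i _ => hω i

/-- On the `m`-measurable sets where `W` and `ζ` are bounded, the one-step gain
`∑ i, ζ i * Y i` is integrable with vanishing conditional expectation; these sets exhaust `Ω`. -/
theorem condExp_le_of_le_add_sum_mul [IsFiniteMeasure Q] (hm : m ≤ m₀) {Z W : Ω → ℝ}
    (hZ : Integrable Z Q) (hW : Measurable[m] W) (hζ : Measurable[m] ζ)
    (hY : ∀ i, Integrable (fun ω => Y ω i) Q) (hY0 : ∀ i, Q[fun ω => Y ω i|m] =ᵐ[Q] 0)
    (hle : ∀ᵐ ω ∂Q, Z ω ≤ W ω + ∑ i, ζ ω i * Y ω i) :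
    Q[Z|m] ≤ᵐ[Q] W := by
  let A (n : ℕ) : Set Ω := {ω | ‖W ω‖ ≤ n ∧ ‖ζ ω‖ ≤ n}
  have hA n : MeasurableSet[m] (A n) :=
    (measurable_norm.comp hW measurableSet_Iic).inter (measurable_norm.comp hζ measurableSet_Iic)
  have hloc n : ∀ᵐ ω ∂Q, ω ∈ A n → Q[Z|m] ω ≤ W ω := by
    set b := (A n).indicator W
    set φ := (A n).indicator ζ
    have hb : StronglyMeasurable[m] b := (hW.indicator (hA n)).stronglyMeasurable
    have hbint : Integrable b Q := .of_bound (hb.mono hm).aestronglyMeasurable n <|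
      ae_of_all _ fun ω => by
        by_cases h : ω ∈ A n
        · simpa [b, h] using h.1
        · simp [b, h]
    have hφ : Measurable[m] φ := hζ.indicator (hA n)
    have hφc ω : ‖φ ω‖ ≤ n := by
      by_cases h : ω ∈ A n
      · simpa [φ, h] using h.2
      · simp [φ, h]
    have hgain := integrable_sum_mul_of_norm_le hm hφ hφc hY
    have hle' : (A n).indicator Z ≤ᵐ[Q] b + fun ω => ∑ i, φ ω i * Y ω i := by
      filter_upwards [hle] with ω hω
      by_cases h : ω ∈ A n <;> simp [b, φ, h, hω]
    filter_upwards [condExp_mono (m := m) (hZ.indicator (hm _ (hA n))) (hbint.add hgain) hle',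
      condExp_indicator (m := m) hZ (hA n), condExp_add hbint hgain m,
      condExp_sum_mul_eq_zero_of_norm_le hm hφ hφc hY hY0] with ω hmono hind hadd hzero hω
    rw [hind, hadd, condExp_of_stronglyMeasurable hm hb hbint] at hmono
    simpa [b, hω, hzero] using hmono
  filter_upwards [ae_all_iff.2 hloc] with ω hω
  obtain ⟨n, hn⟩ := exists_nat_ge (max ‖W ω‖ ‖ζ ω‖)
  exact hω n ⟨(le_max_left _ _).trans hn, (le_max_right _ _).trans hn⟩

end CondExp

section Market

variable {m : MeasurableSpace Ω} {d T : ℕ} {F : Filtration ℕ m} {P Q : Measure Ω}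
  {X ξ : ℕ → Ω → Fin d → ℝ} {H : Ω → ℝ} {s t : ℕ}

theorem IsEMM.ae_eq_ae (hQ : IsEMM P Q F X T) : ae Q = ae P :=
  le_antisymm (Measure.AbsolutelyContinuous.mk fun A _ hA => (hQ.2.1 A).1 hA).ae_le
    (Measure.AbsolutelyContinuous.mk fun A _ hA => (hQ.2.1 A).2 hA).ae_le

theorem IsEMM.integrable_increment (hQ : IsEMM P Q F X T) (ht : t < T) (i : Fin d) :
    Integrable (fun ω => X (t + 1) ω i - X t ω i) Q :=
  (hQ.2.2.1 _ ht i).sub (hQ.2.2.1 _ ht.le i)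

theorem IsEMM.condExp_increment (hQ : IsEMM P Q F X T) (hXt : Measurable[F t] (X t))
    (ht : t < T) (i : Fin d) :
    Q[fun ω => X (t + 1) ω i - X t ω i|F t] =ᵐ[Q] 0 := by
  have := hQ.1
  have hXti : Measurable[F t] fun ω => X t ω i := (measurable_pi_apply i).comp hXt
  have hsub : Q[fun ω => X (t + 1) ω i - X t ω i|F t]
      =ᵐ[Q] Q[fun ω => X (t + 1) ω i|F t] - Q[fun ω => X t ω i|F t] :=
    condExp_sub (hQ.2.2.1 _ ht i) (hQ.2.2.1 _ ht.le i) (F t)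
  filter_upwards [hsub, hQ.2.2.2 t ht i] with ω hsub hmart
  rw [hsub, Pi.sub_apply, hmart, condExp_of_stronglyMeasurable (F.le t)
    hXti.stronglyMeasurable (hQ.2.2.1 _ ht.le i), sub_self, Pi.zero_apply]

theorem Predictable.measurable_succ (hξ : Predictable F ξ) (t : ℕ) :
    Measurable[F t] (ξ (t + 1)) := by
  simpa using hξ (t + 1) (by omega)

theorem gains_eq_add (ht : t < T) (ω : Ω) :
    Gains X ξ t T ω = ∑ i, ξ (t + 1) ω i * (X (t + 1) ω i - X t ω i) + Gains X ξ (t + 1) T ω := by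
  rw [Gains, Finset.Icc_eq_cons_Ioc (by omega), Finset.sum_cons,
    ← Finset.Icc_add_one_left_eq_Ioc, Nat.add_sub_cancel]
  rfl

theorem gains_congr {η : ℕ → Ω → Fin d → ℝ} {ω : Ω} (h : ∀ k, t < k → ξ k ω = η k ω) :
    Gains X ξ t T ω = Gains X η t T ω :=
  Finset.sum_congr rfl fun k hk => by rw [h k (Finset.mem_Icc.1 hk).1]

theorem const_mem_superPrices {c : ℝ} (hH : ∀ᵐ ω ∂P, H ω ≤ c) :
    (fun _ => c) ∈ SuperPrices P F X T t H :=
  ⟨measurable_const, 0, fun _ _ => measurable_const, by simpa [Gains] using hH⟩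

theorem inf_mem_superPrices {f f' : Ω → ℝ} (hf : f ∈ SuperPrices P F X T t H)
    (hf' : f' ∈ SuperPrices P F X T t H) : f ⊓ f' ∈ SuperPrices P F X T t H := by
  obtain ⟨hfm, ξ, hξ, hH⟩ := hf
  obtain ⟨hfm', ξ', hξ', hH'⟩ := hf'
  set A := {ω | f ω ≤ f' ω}
  have hA : MeasurableSet[F t] A := measurableSet_le hfm hfm'
  refine ⟨hfm.inf hfm', fun k => if t < k then A.piecewise (ξ k) (ξ' k) else ξ' k,
    fun k hk => ?_, ?_⟩
  · dsimp only
    split_ifs with htk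
    · exact (hξ k hk).piecewise (F.mono (by omega) _ hA) (hξ' k hk)
    · exact hξ' k hk
  · filter_upwards [hH, hH'] with ω h h'
    by_cases hω : ω ∈ A
    · rw [gains_congr (η := ξ) fun k hk => by simp [hk, hω], Pi.inf_apply, inf_eq_left.2 hω]
      exact h
    · rw [gains_congr (η := ξ') fun k hk => by simp [hk, hω], Pi.inf_apply,
        inf_eq_right.2 (le_of_not_ge hω)]
      exact h'

theorem add_gain_mem_superPrices (hX : ∀ t, Measurable[F t] (X t)) (ht : t < T) {f : Ω → ℝ}
    (hfm : Measurable[F t] f) (hξ : Predictable F ξ)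
    (hH : ∀ᵐ ω ∂P, H ω ≤ f ω + Gains X ξ t T ω) :
    (fun ω => f ω + ∑ i, ξ (t + 1) ω i * (X (t + 1) ω i - X t ω i))
      ∈ SuperPrices P F X T (t + 1) H := by
  have hle : F t ≤ F (t + 1) := F.mono t.le_succ
  refine ⟨?_, ξ, hξ, ?_⟩
  · have hξt := (hξ.measurable_succ t).mono hle le_rfl
    have hXt := (hX t).mono hle le_rfl
    exact (hfm.mono hle le_rfl).add <| Finset.measurable_sum _ fun i _ =>
      ((measurable_pi_apply i).comp hξt).mul
        (((measurable_pi_apply i).comp (hX (t + 1))).sub ((measurable_pi_apply i).comp hXt))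
  · filter_upwards [hH] with ω h
    rwa [gains_eq_add ht, ← add_assoc] at h

/-- Backward induction on `s`: by `condExp_le_of_le_add_sum_mul`, a position that is worth
at least `c` after one more trade was already worth at least `c`. -/
theorem isAELowerBound_superPrices (hX : ∀ t, Measurable[F t] (X t)) (hQ : IsEMM P Q F X T)
    {c : ℝ} (hH : ∀ᵐ ω ∂P, c ≤ H ω) (hs : s ≤ T) :
    IsAELowerBound P (SuperPrices P F X T s H) fun _ => c := by
  have := hQ.1
  suffices ∀ n s, s + n = T → IsAELowerBound P (SuperPrices P F X T s H) fun _ => c from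
    this (T - s) s (by omega)
  intro n
  induction n with
  | zero =>
    rintro s rfl f ⟨-, ξ, -, hf⟩
    filter_upwards [hH, hf] with ω hc hf
    simpa [Gains] using hc.trans hf
  | succ n ih =>
    rintro s hsn f ⟨hfm, ξ, hξ, hf⟩
    have hsT : s < T := by omega
    have hnext := ih (s + 1) (by omega) _ (add_gain_mem_superPrices hX hsT hfm hξ hf)
    rw [← hQ.ae_eq_ae] at hnext ⊢
    simpa only [condExp_const (F.le s)] using condExp_le_of_le_add_sum_mul (F.le s)
      (integrable_const c) hfm (hξ.measurable_succ s) (hQ.integrable_increment hsT)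
      (hQ.condExp_increment (hX s) hsT) hnext

theorem IsEssInfOf.integrable_of_superPrices [IsProbabilityMeasure P]
    (hX : ∀ t, Measurable[F t] (X t)) (hQ : IsEMM P Q F X T) {C : ℝ}
    (hH : ∀ᵐ ω ∂P, |H ω| ≤ C) (hs : s ≤ T) {g : Ω → ℝ}
    (hg : IsEssInfOf P (SuperPrices P F X T s H) g) : Integrable g Q := by
  have := hQ.1
  have hC : (fun _ => C) ∈ SuperPrices P F X T s H :=
    const_mem_superPrices (hH.mono fun _ h => (abs_le.1 h).2)
  have hlb := isAELowerBound_superPrices hX hQ (hH.mono fun _ h => (abs_le.1 h).1) hs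
  obtain ⟨h, hm, hh⟩ := exists_measurable_isEssInfOf ⟨_, hC⟩
    (fun f hf => hf.1.mono (F.le s) le_rfl) (fun _ hf _ hf' => inf_mem_superPrices hf hf') hlb
  have hgh : h =ᵐ[Q] g := by
    rw [hQ.ae_eq_ae]
    exact hh.ae_eq hg
  refine .of_bound (hm.aestronglyMeasurable.congr hgh) C ?_
  rw [hQ.ae_eq_ae]
  filter_upwards [hg.1 _ hC, hg.2 _ hlb] with ω hup hlow
  exact abs_le.2 ⟨hlow, hup⟩

end Market

theorem superhedging_prices_supermartingale_general
    {m : MeasurableSpace Ω} {d T : ℕ} (F : Filtration ℕ m)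
    (P : Measure Ω) [IsProbabilityMeasure P]
    (X : ℕ → Ω → Fin d → ℝ) (hX : ∀ t, Measurable[F t] (X t))
    (H : Ω → ℝ) (C : ℝ) (hHb : ∀ᵐ ω ∂P, |H ω| ≤ C)
    (Q : Measure Ω) (hQ : IsEMM P Q F X T)
    (t : ℕ) (ht : t + 1 ≤ T)
    (g g' : Ω → ℝ)
    (hg : IsEssInfOf P (SuperPrices P F X T t H) g)
    (hg' : IsEssInfOf P (SuperPrices P F X T (t + 1) H) g') :
    (Q[g'|F t]) ≤ᵐ[P] g := by
  have := hQ.1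
  have hint : Integrable g' Q := hg'.integrable_of_superPrices hX hQ hHb ht
  refine hg.2 _ fun f ⟨hfm, ξ, hξ, hH⟩ => ?_
  have hstep := hg'.1 _ (add_gain_mem_superPrices hX ht hfm hξ hH)
  rw [← hQ.ae_eq_ae] at hstep ⊢
  exact condExp_le_of_le_add_sum_mul (F.le t) hint hfm (hξ.measurable_succ t)
    (hQ.integrable_increment ht) (hQ.condExp_increment (hX t) ht) hstep

/-- For every bounded claim `H ∈ L^∞(P)`, the process of smallest
super-hedging prices `(E_t(H))_t` is a supermartingale under every equivalent
martingale measure `Q`: `E_Q[E_{t+1}(H) | F_t] ≤ E_t(H)`. -/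
theorem superhedging_prices_supermartingale
    {m : MeasurableSpace Ω} {d T : ℕ} (F : Filtration ℕ m)
    (P : Measure Ω) [IsProbabilityMeasure P]
    (X : ℕ → Ω → Fin d → ℝ) (hX : ∀ t, Measurable[F t] (X t))
    (hFT : (F T : MeasurableSpace Ω) = m)
    (hNA : ∃ Q : Measure Ω, IsEMM P Q F X T)
    (H : Ω → ℝ) (hH : Measurable H) (C : ℝ) (hHb : ∀ᵐ ω ∂P, |H ω| ≤ C)
    (Q : Measure Ω) (hQ : IsEMM P Q F X T)
    (t : ℕ) (ht : t + 1 ≤ T)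
    (g g' : Ω → ℝ)
    (hg : IsEssInfOf P (SuperPrices P F X T t H) g)
    (hg' : IsEssInfOf P (SuperPrices P F X T (t + 1) H) g') :
    (Q[g'|F t]) ≤ᵐ[P] g :=
  superhedging_prices_supermartingale_general F P X hX H C hHb Q hQ t ht g g' hg hg'
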